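/- arXiv:2605.24303 — 3 statements merged into one kernel-verified Lean document; each statement's English description precedes it below -/
import Mathlib

section
/- Let V be a complex vector space with dim V ≥ 3. If σ : V × V → V is an alternating bilinear map such that σ(u,v) lies in the linear span of u and v for all u, v ∈ V, then there exists a linear functional λ ∈ V* with σ(u,v) = λ(u)v − λ(v)u for all u, v ∈ V. -/
/-!
For fixed `u`, the map `σ u` preserves `K ∙ u`, and on `V ⧸ K ∙ u` every vector is an
eigenvector of it, so it acts there as a scalar `λ u` (`spencerCoeff`). Comparing `σ (u + u') v`
with `σ u v + σ u' v` modulo `span {u, u'}`, which misses some `v` as soon as `dim V ≥ 3`, shows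
that `λ` is linear. Finally `σ u v - λ u • v + λ v • u` lies in `K ∙ u` and, by antisymmetry, in
`K ∙ v`, so it vanishes unless `u` and `v` are proportional, a case where both sides vanish anyway.
-/

open Module Submodule

section

variable {K V : Type*} [Field K] [AddCommGroup V] [Module K V]

theorem LinearMap.exists_smul_sub_mem_span_singleton {f : V →ₗ[K] V} {u : V}
    (hf : ∀ v, f v ∈ span K {u, v}) : ∃ a : K, ∀ v, f v - a • v ∈ K ∙ u := by
  have hu : K ∙ u ≤ (K ∙ u).comap f := by
    rw [span_singleton_le_iff_mem, mem_comap]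
    simpa using hf u
  obtain ⟨a, ha⟩ := LinearMap.exists_eq_smul_id_of_forall_notLinearIndependent
      (f := (K ∙ u).mapQ (K ∙ u) f hu) <| by
    intro x
    induction x using Submodule.Quotient.induction_on with | H v => ?_
    obtain ⟨α, β, hαβ⟩ := mem_span_pair.mp (hf v)
    have hfv : (K ∙ u).mapQ (K ∙ u) f hu (Submodule.Quotient.mk v) =
        β • Submodule.Quotient.mk v := by
      rw [mapQ_apply, ← hαβ, Quotient.mk_add, Quotient.mk_smul, Quotient.mk_smul,
        (Quotient.mk_eq_zero _).mpr (mem_span_singleton_self u), smul_zero, zero_add]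
    rw [hfv, LinearIndependent.pair_iff]
    intro h
    simpa using h β (-1) (by simp)
  refine ⟨a, fun v => ?_⟩
  have := LinearMap.congr_fun ha (Submodule.Quotient.mk v)
  rwa [mapQ_apply, LinearMap.smul_apply, Module.End.one_apply, ← Quotient.mk_smul,
    Submodule.Quotient.eq] at this

theorem Submodule.eq_zero_of_forall_smul_mem {W : Submodule K V} (hW : W ≠ ⊤) {a : K}
    (h : ∀ v, a • v ∈ W) : a = 0 := by
  obtain ⟨v, hv⟩ := SetLike.exists_not_mem_of_ne_top W hW
  by_contra ha
  exact hv ((smul_mem_iff W ha).mp (h v))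

theorem Submodule.span_pair_ne_top [FiniteDimensional K V] (h3 : 3 ≤ finrank K V) (u v : V) :
    span K {u, v} ≠ ⊤ := by
  classical
  intro htop
  have hle := finrank_span_finset_le_card (R := K) ({u, v} : Finset V)
  rw [Set.finrank, Finset.coe_pair, htop, finrank_top] at hle
  have := Finset.card_le_two (a := u) (b := v)
  omega

variable {σ : V →ₗ[K] V →ₗ[K] V} (hspan : ∀ u v, σ u v ∈ span K {u, v})
include hspan

noncomputable def spencerCoeff (u : V) : K :=
  (LinearMap.exists_smul_sub_mem_span_singleton (hspan u)).choose

theorem sub_spencerCoeff_smul_mem (u v : V) : σ u v - spencerCoeff hspan u • v ∈ K ∙ u :=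
  (LinearMap.exists_smul_sub_mem_span_singleton (hspan u)).choose_spec v

variable [FiniteDimensional K V] (h3 : 3 ≤ finrank K V)
include h3

theorem spencerCoeff_add (u u' : V) :
    spencerCoeff hspan (u + u') = spencerCoeff hspan u + spencerCoeff hspan u' := by
  have hu : K ∙ u ≤ span K {u, u'} := span_mono (by simp)
  have hu' : K ∙ u' ≤ span K {u, u'} := span_mono (by simp)
  have huu' : K ∙ (u + u') ≤ span K {u, u'} := (span_singleton_le_iff_mem _ _).mpr <|
    add_mem (subset_span (by simp)) (subset_span (by simp))
  have key (v : V) : (spencerCoeff hspan (u + u') - (spencerCoeff hspan u + spencerCoeff hspan u'))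
      • v ∈ span K {u, u'} := by
    convert sub_mem (add_mem (hu (sub_spencerCoeff_smul_mem hspan u v))
      (hu' (sub_spencerCoeff_smul_mem hspan u' v)))
      (huu' (sub_spencerCoeff_smul_mem hspan (u + u') v)) using 1
    simp only [map_add, LinearMap.add_apply]
    module
  exact sub_eq_zero.mp (eq_zero_of_forall_smul_mem (span_pair_ne_top h3 u u') key)

theorem spencerCoeff_smul (c : K) (u : V) :
    spencerCoeff hspan (c • u) = c * spencerCoeff hspan u := by
  have hcu : K ∙ (c • u) ≤ K ∙ u := span_singleton_smul_le K c u
  have key (v : V) : (spencerCoeff hspan (c • u) - c * spencerCoeff hspan u) • v ∈ K ∙ u := by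
    convert sub_mem (smul_mem _ c (sub_spencerCoeff_smul_mem hspan u v))
      (hcu (sub_spencerCoeff_smul_mem hspan (c • u) v)) using 1
    simp only [map_smul, LinearMap.smul_apply]
    module
  have hne : K ∙ u ≠ ⊤ := by simpa using span_pair_ne_top h3 u u
  exact sub_eq_zero.mp (eq_zero_of_forall_smul_mem hne key)

@[simps]
noncomputable def spencerFunctional : V →ₗ[K] K where
  toFun := spencerCoeff hspan
  map_add' := spencerCoeff_add hspan h3
  map_smul' := spencerCoeff_smul hspan h3

theorem LinearMap.IsAlt.apply_eq_spencerFunctional (halt : σ.IsAlt) (u v : V) :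
    σ u v = spencerFunctional hspan h3 u • v - spencerFunctional hspan h3 v • u := by
  rw [spencerFunctional_apply, spencerFunctional_apply, ← sub_eq_zero]
  by_cases hv : v ∈ K ∙ u
  · obtain ⟨c, rfl⟩ := mem_span_singleton.mp hv
    rw [spencerCoeff_smul hspan h3, map_smul, halt.self_eq_zero, smul_zero, smul_smul, mul_comm,
      sub_self, sub_self]
  have hmem_u : σ u v - (spencerCoeff hspan u • v - spencerCoeff hspan v • u) ∈ K ∙ u := by
    convert add_mem (sub_spencerCoeff_smul_mem hspan u v)
      (smul_mem _ (spencerCoeff hspan v) (mem_span_singleton_self u)) using 1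
    module
  have hmem_v : σ u v - (spencerCoeff hspan u • v - spencerCoeff hspan v • u) ∈ K ∙ v := by
    convert sub_mem (neg_mem (sub_spencerCoeff_smul_mem hspan v u))
      (smul_mem _ (spencerCoeff hspan u) (mem_span_singleton_self v)) using 1
    rw [← halt.neg u v]
    module
  exact disjoint_def.mp (disjoint_span_singleton.mpr (absurd · hv)) _ hmem_u hmem_v

end

/-- Let `V` be a complex vector space with `dim V ≥ 3`. If `σ : V × V → V` is an
alternating bilinear map such that `σ(u,v)` lies in the linear span of `u` and `v` for all
`u, v ∈ V`, then there exists a linear functional `λ ∈ V*` with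
`σ(u,v) = λ(u)v − λ(v)u` for all `u, v ∈ V`. -/
theorem alternating_span_valued_is_spencer (V : Type*) [AddCommGroup V] [Module ℂ V]
    [FiniteDimensional ℂ V] (h3 : 3 ≤ Module.finrank ℂ V)
    (σ : V →ₗ[ℂ] V →ₗ[ℂ] V)
    (halt : ∀ v : V, σ v v = 0)
    (hspan : ∀ u v : V, σ u v ∈ Submodule.span ℂ ({u, v} : Set V)) :
    ∃ l : V →ₗ[ℂ] ℂ, ∀ u v : V, σ u v = l u • v - l v • u :=
  ⟨spencerFunctional hspan h3, LinearMap.IsAlt.apply_eq_spencerFunctional hspan h3 halt⟩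
end

section
/- For a complex vector space V with dim V = n ≥ 3, the space {σ ∈ Hom(Λ²V, V) | σ(u,v) ∈ Cu + Cv for all u,v ∈ V} has dimension exactly n (it is isomorphic to V* via λ ↦ ((u,v) ↦ λ(u)v − λ(v)u)). -/
open Submodule Module

/-!
For fixed `u`, the endomorphism `σ u` maps every `v` into `span {u, v}`, so on `V ⧸ K ∙ u` it
sends each vector to a multiple of itself and is therefore a homothety:
`σ u v ≡ l u • v (mod K ∙ u)`. Comparing `l` at `u₁`, `u₂` and `u₁ + u₂` on a test vector outside
`span {u₁, u₂}` (which exists because `dim V ≥ 3`) shows that `l` is linear. Then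
`σ - ((u, v) ↦ l u • v - l v • u)` is alternating with values in `K ∙ u`, hence by antisymmetry
also in `K ∙ v`, so it vanishes.
-/

section CommRing

variable {R M : Type*} [CommRing R] [AddCommGroup M] [Module R M]

variable (R M) in
def spanValuedAlternating : Submodule R (M →ₗ[R] M →ₗ[R] M) where
  carrier := {σ | σ.IsAlt ∧ ∀ u v, σ u v ∈ span R {u, v}}
  add_mem' {σ τ} hσ hτ :=
    ⟨fun v => by simp [hσ.1.self_eq_zero, hτ.1.self_eq_zero],
      fun u v => add_mem (hσ.2 u v) (hτ.2 u v)⟩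
  zero_mem' := ⟨fun _ => rfl, fun _ _ => zero_mem _⟩
  smul_mem' t σ hσ := ⟨fun v => by simp [hσ.1.self_eq_zero], fun u v => smul_mem _ t (hσ.2 u v)⟩

variable (R M) in
def alternatingOfDual : (M →ₗ[R] R) →ₗ[R] M →ₗ[R] M →ₗ[R] M where
  toFun l := LinearMap.mk₂ R (fun u v => l u • v - l v • u)
    (fun _ _ _ => by simp only [map_add]; module)
    (fun _ _ _ => by simp only [map_smul, smul_eq_mul]; module)
    (fun _ _ _ => by simp only [map_add]; module)
    (fun _ _ _ => by simp only [map_smul, smul_eq_mul]; module)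
  map_add' _ _ := by ext; simp only [LinearMap.mk₂_apply, LinearMap.add_apply]; module
  map_smul' _ _ := by
    ext; simp only [LinearMap.mk₂_apply, LinearMap.smul_apply, RingHom.id_apply]; module

@[simp]
theorem alternatingOfDual_apply (l : M →ₗ[R] R) (u v : M) :
    alternatingOfDual R M l u v = l u • v - l v • u :=
  rfl

theorem alternatingOfDual_mem_spanValuedAlternating (l : M →ₗ[R] R) :
    alternatingOfDual R M l ∈ spanValuedAlternating R M :=
  ⟨fun _ => sub_self _, fun _ _ =>
    sub_mem (smul_mem _ _ (subset_span (by simp))) (smul_mem _ _ (subset_span (by simp)))⟩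

end CommRing

section Field

variable {K V : Type*} [Field K] [AddCommGroup V] [Module K V]

theorem exists_notMem_span_of_card_lt_finrank {s : Finset V} (h : s.card < finrank K V) :
    ∃ w, w ∉ span K (s : Set V) := by
  have : Module.Finite K V := Module.finite_of_finrank_pos (by omega)
  obtain ⟨w, -, hw⟩ := SetLike.exists_of_lt <|
    span_lt_top_of_card_lt_finrank (s := (s : Set V)) (by simpa using h)
  exact ⟨w, hw⟩

theorem exists_notMem_span_pair (h : 2 < finrank K V) (u v : V) :
    ∃ w, w ∉ span K {u, v} := by
  classical
  simpa using exists_notMem_span_of_card_lt_finrank (K := K) (s := {u, v})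
    ((Finset.card_le_two).trans_lt h)

theorem exists_notMem_span_singleton (h : 1 < finrank K V) (u : V) : ∃ w, w ∉ K ∙ u := by
  simpa using exists_notMem_span_of_card_lt_finrank (K := K) (s := {u}) (by simpa using h)

theorem LinearMap.exists_sub_smul_mem_span_singleton_of_forall_mem_span_pair
    {f : V →ₗ[K] V} {u : V} (hf : ∀ v, f v ∈ span K {u, v}) :
    ∃ c : K, ∀ v, f v - c • v ∈ K ∙ u := by
  have hu : K ∙ u ≤ (K ∙ u).comap f := by
    simpa [span_le] using hf u
  obtain ⟨c, hc⟩ := LinearMap.exists_eq_smul_id_of_forall_notLinearIndependent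
    (f := (K ∙ u).mapQ (K ∙ u) f hu) <| by
      intro x
      obtain ⟨v, rfl⟩ := (K ∙ u).mkQ_surjective x
      obtain ⟨a, b, hab⟩ := mem_span_pair.mp (hf v)
      have hfv : (K ∙ u).mapQ (K ∙ u) f hu ((K ∙ u).mkQ v) = b • (K ∙ u).mkQ v := by
        simp [← hab, (Quotient.mk_eq_zero _).mpr (mem_span_singleton_self u)]
      rw [hfv, LinearIndependent.pair_iff]
      exact fun h => one_ne_zero (neg_eq_zero.mp (h b (-1) (by simp)).2)
  refine ⟨c, fun v => (Submodule.Quotient.eq _).mp ?_⟩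
  simpa using congr($hc ((K ∙ u).mkQ v))

theorem exists_dual_sub_smul_mem_span_singleton (h : 2 < finrank K V) {σ : V →ₗ[K] V →ₗ[K] V}
    (hσ : ∀ u v, σ u v ∈ span K {u, v}) :
    ∃ l : V →ₗ[K] K, ∀ u v, σ u v - l u • v ∈ K ∙ u := by
  choose c hc using fun u =>
    (σ u).exists_sub_smul_mem_span_singleton_of_forall_mem_span_pair (hσ u)
  have c_eq_of_sub_smul_mem {u v : V} {d : K} {W : Submodule K V} (huW : K ∙ u ≤ W) (hv : v ∉ W)
      (hd : σ u v - d • v ∈ W) : c u = d := by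
    by_contra hne
    refine hv ((W.smul_mem_iff (sub_ne_zero.mpr hne)).mp ?_)
    convert W.sub_mem hd (huW (hc u v)) using 1
    module
  refine ⟨⟨⟨c, fun u₁ u₂ => ?_⟩, fun t u => ?_⟩, hc⟩
  · obtain ⟨v, hv⟩ := exists_notMem_span_pair h u₁ u₂
    have h₁ : K ∙ u₁ ≤ span K {u₁, u₂} := span_mono (by simp)
    have h₂ : K ∙ u₂ ≤ span K {u₁, u₂} := span_mono (by simp)
    refine c_eq_of_sub_smul_mem ((span_singleton_le_iff_mem _ _).mpr
      (add_mem (h₁ (mem_span_singleton_self u₁)) (h₂ (mem_span_singleton_self u₂)))) hv ?_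
    convert add_mem (h₁ (hc u₁ v)) (h₂ (hc u₂ v)) using 1
    simp only [map_add, LinearMap.add_apply]
    module
  · obtain ⟨v, hv⟩ := exists_notMem_span_singleton (K := K) (by omega) u
    refine c_eq_of_sub_smul_mem (span_singleton_smul_le K t u) hv ?_
    convert smul_mem _ t (hc u v) using 1
    simp only [map_smul, LinearMap.smul_apply, RingHom.id_apply, smul_eq_mul]
    module

theorem LinearMap.IsAlt.eq_zero_of_forall_mem_span_singleton {τ : V →ₗ[K] V →ₗ[K] V}
    (hτ : τ.IsAlt) (h : ∀ u v, τ u v ∈ K ∙ u) : τ = 0 := by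
  ext u v
  by_cases hv : v ∈ K ∙ u
  · obtain ⟨t, rfl⟩ := mem_span_singleton.mp hv
    simp [hτ.self_eq_zero]
  · have hv₀ : v ≠ 0 := fun h₀ => hv (h₀ ▸ zero_mem _)
    refine disjoint_iff_inf_le.mp ((disjoint_span_singleton' hv₀).mpr hv) ⟨h u v, ?_⟩
    rw [← hτ.neg v u]
    exact neg_mem (h v u)

theorem alternatingOfDual_injective (h : 1 < finrank K V) :
    Function.Injective (alternatingOfDual K V) := by
  refine (injective_iff_map_eq_zero _).mpr fun l hl => LinearMap.ext fun u => by_contra fun hu => ?_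
  obtain ⟨v, hv⟩ := exists_notMem_span_singleton h u
  have huv : l u • v = l v • u := sub_eq_zero.mp congr($hl u v)
  exact hv ((smul_mem_iff _ hu).mp (huv ▸ smul_mem _ _ (mem_span_singleton_self u)))

theorem range_alternatingOfDual (h : 2 < finrank K V) :
    LinearMap.range (alternatingOfDual K V) = spanValuedAlternating K V := by
  refine le_antisymm ?_ fun σ ⟨hσ, hspan⟩ => ?_
  · rintro _ ⟨l, rfl⟩
    exact alternatingOfDual_mem_spanValuedAlternating l
  obtain ⟨l, hl⟩ := exists_dual_sub_smul_mem_span_singleton h hspan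
  refine ⟨l, (sub_eq_zero.mp ?_).symm⟩
  refine LinearMap.IsAlt.eq_zero_of_forall_mem_span_singleton
    (fun v => by simp [hσ.self_eq_zero]) fun u v => ?_
  convert add_mem (hl u v) (smul_mem _ (l v) (mem_span_singleton_self u)) using 1
  simp only [LinearMap.sub_apply, alternatingOfDual_apply]
  abel

noncomputable def alternatingOfDualEquiv (h : 2 < finrank K V) :
    (V →ₗ[K] K) ≃ₗ[K] spanValuedAlternating K V :=
  (LinearEquiv.ofInjective _ (alternatingOfDual_injective (by omega))).trans
    (LinearEquiv.ofEq _ _ (range_alternatingOfDual h))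

theorem finrank_spanValuedAlternating (h : 2 < finrank K V) :
    finrank K (spanValuedAlternating K V) = finrank K V :=
  (alternatingOfDualEquiv h).finrank_eq.symm.trans Subspace.dual_finrank_eq

end Field

theorem dim_span_valued_alternating_general (V : Type*) [AddCommGroup V] [Module ℂ V]
    (n : ℕ) (hn : Module.finrank ℂ V = n) (h3 : 3 ≤ n) :
    ∃ S : Submodule ℂ (V →ₗ[ℂ] V →ₗ[ℂ] V),
      (∀ σ : V →ₗ[ℂ] V →ₗ[ℂ] V,
        σ ∈ S ↔ ((∀ v : V, σ v v = 0) ∧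
          ∀ u v : V, σ u v ∈ Submodule.span ℂ ({u, v} : Set V))) ∧
      Module.finrank ℂ S = n ∧
      ∃ e : (V →ₗ[ℂ] ℂ) ≃ₗ[ℂ] S,
        ∀ (l : V →ₗ[ℂ] ℂ) (u v : V), ((e l : V →ₗ[ℂ] V →ₗ[ℂ] V) u) v = l u • v - l v • u := by
  have h : 2 < finrank ℂ V := by omega
  exact ⟨spanValuedAlternating ℂ V, fun _ => Iff.rfl, hn ▸ finrank_spanValuedAlternating h,
    alternatingOfDualEquiv h, fun _ _ _ => rfl⟩

/-- For a complex vector space `V` with `dim V = n ≥ 3`, the space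
`{σ ∈ Hom(Λ²V, V) | σ(u,v) ∈ ℂu + ℂv for all u,v ∈ V}` has dimension exactly `n`;
it is isomorphic to `V*` via `λ ↦ ((u,v) ↦ λ(u)v − λ(v)u)`.
Here `Hom(Λ²V, V)` is realized as the alternating bilinear maps `V × V → V`. -/
theorem dim_span_valued_alternating (V : Type*) [AddCommGroup V] [Module ℂ V]
    [FiniteDimensional ℂ V] (n : ℕ) (hn : Module.finrank ℂ V = n) (h3 : 3 ≤ n) :
    ∃ S : Submodule ℂ (V →ₗ[ℂ] V →ₗ[ℂ] V),
      (∀ σ : V →ₗ[ℂ] V →ₗ[ℂ] V,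
        σ ∈ S ↔ ((∀ v : V, σ v v = 0) ∧
          ∀ u v : V, σ u v ∈ Submodule.span ℂ ({u, v} : Set V))) ∧
      Module.finrank ℂ S = n ∧
      ∃ e : (V →ₗ[ℂ] ℂ) ≃ₗ[ℂ] S,
        ∀ (l : V →ₗ[ℂ] ℂ) (u v : V), ((e l : V →ₗ[ℂ] V →ₗ[ℂ] V) u) v = l u • v - l v • u :=
  dim_span_valued_alternating_general V n hn h3
end

section
/- Let V be a complex vector space and q a nondegenerate quadratic form on V with dim V ≥ 3. If g ∈ GL(V) maps the zero cone {v ∈ V | q(v) = 0} onto itself, then there exists a nonzero constant c ∈ C with q(g(v)) = c·q(v) for all v ∈ V. (Thus the linear automorphism group of the affine cone over a smooth quadric hypersurface is the conformal orthogonal group C* · O(q).) -/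
/-!
Put `q' = q ∘ g`, a quadratic form vanishing on the cone of `q`, and write `B`, `B'` for the
polar forms. If `u` is isotropic, the line `t ↦ u + t • x` meets the cone again at
`t = -B(u,x) / q(x)`, which forces `B'(u,x) q(x) = B(u,x) q'(x)`. Over `ℂ` there are isotropic
`u`, `w` with `B(u,w) ≠ 0`. Taking `x = v + s • w` turns the identity into one between quadratic
polynomials in `s`; comparing leading coefficients gives `B'(w,·) = c B(w,·)` with
`c = B'(u,w) / B(u,w)`, symmetrically `B'(u,·) = c B(u,·)`, and then `q' = c q`.
-/

open QuadraticMap Module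

theorem mul_eq_mul_of_forall_ne_linear_mul_linear {K : Type*} [Field K] [CharZero K]
    {a b c d a' b' c' d' s₀ : K}
    (h : ∀ s ≠ s₀, (a + s * b) * (c + s * d) = (a' + s * b') * (c' + s * d')) :
    b * d = b' * d' := by
  have h₁ := h (s₀ + 1) (by simp)
  have h₂ := h (s₀ + 2) (by simp)
  have h₃ := h (s₀ + 3) (by simp)
  -- the second difference of a quadratic with step `1` is twice its leading coefficient
  linear_combination (h₁ - 2 * h₂ + h₃) / 2

namespace QuadraticForm

variable {K V : Type*} [Field K] [AddCommGroup V] [Module K V]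

theorem map_add_smul (Q : QuadraticForm K V) (x y : V) (t : K) :
    Q (x + t • y) = Q x + t * polar Q x y + t ^ 2 * Q y := by
  rw [QuadraticMap.map_add Q, QuadraticMap.map_smul, polar_smul_right, smul_eq_mul, smul_eq_mul]
  ring

theorem exists_ne_zero_of_polar_nondegenerate [Nontrivial V] {q : QuadraticForm K V}
    (hnd : ∀ v, (∀ w, polar q v w = 0) → v = 0) : ∃ x, q x ≠ 0 := by
  by_contra! h
  obtain ⟨v, hv⟩ := exists_ne (0 : V)
  exact hv (hnd v fun w => by simp [polar, h])

theorem exists_isotropic_ne_zero [IsAlgClosed K] [NeZero (2 : K)] (h2 : 1 < finrank K V)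
    {q : QuadraticForm K V} {x : V} (hx : q x ≠ 0) : ∃ u, u ≠ 0 ∧ q u = 0 := by
  obtain ⟨y, hxy⟩ := exists_linearIndependent_pair_of_one_lt_finrank h2 (x := x)
    fun h => hx (by simp [h])
  obtain ⟨t, ht⟩ := exists_quadratic_eq_zero hx (IsAlgClosed.exists_eq_mul_self
    (discrim (q x) (polar q y x) (q y)))
  refine ⟨y + t • x, fun h => ?_, ?_⟩
  · exact one_ne_zero (LinearIndependent.pair_iff.mp hxy t 1 (by rw [one_smul, add_comm, h])).2
  · rw [map_add_smul]
    linear_combination ht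

theorem exists_isotropic_polar_ne_zero {q : QuadraticForm K V} {u z : V} (hu : q u = 0)
    (hz : polar q u z ≠ 0) : ∃ w, q w = 0 ∧ polar q u w ≠ 0 := by
  set r := -q z / polar q u z
  refine ⟨z + r • u, ?_, ?_⟩
  · rw [map_add_smul, hu, polar_comm, div_mul_cancel₀ _ hz]
    ring
  · rwa [polar_add_right, polar_smul_right, polar_self, hu, smul_zero, smul_zero, add_zero]

theorem exists_isotropic_pair [IsAlgClosed K] [NeZero (2 : K)] (h2 : 1 < finrank K V)
    {q : QuadraticForm K V} (hnd : ∀ v, (∀ w, polar q v w = 0) → v = 0) :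
    ∃ u w, q u = 0 ∧ q w = 0 ∧ polar q u w ≠ 0 := by
  have := nontrivial_of_finrank_pos (R := K) (M := V) (by omega)
  obtain ⟨x, hx⟩ := exists_ne_zero_of_polar_nondegenerate hnd
  obtain ⟨u, hu0, hu⟩ := exists_isotropic_ne_zero h2 hx
  obtain ⟨z, hz⟩ : ∃ z, polar q u z ≠ 0 := by
    by_contra! h
    exact hu0 (hnd u h)
  obtain ⟨w, hw, huw⟩ := exists_isotropic_polar_ne_zero hu hz
  exact ⟨u, w, hu, hw, huw⟩

section Cone

variable {q q' : QuadraticForm K V} (hq' : ∀ x, q x = 0 → q' x = 0)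
include hq'

theorem polar_mul_eq_polar_mul_of_isotropic {u x : V} (hu : q u = 0)
    (hux : polar q u x ≠ 0) : polar q' u x * q x = polar q u x * q' x := by
  by_cases hx : q x = 0
  · simp [hx, hq' x hx]
  set t := -polar q u x / q x
  have ht : t ≠ 0 := div_ne_zero (neg_ne_zero.mpr hux) hx
  have htx : t * q x = -polar q u x := div_mul_cancel₀ _ hx
  have hline : q' (u + t • x) = 0 := hq' _ <| by
    rw [map_add_smul, hu]
    linear_combination t * htx
  rw [map_add_smul, hq' u hu] at hline
  have : polar q' u x = -t * q' x := mul_left_cancel₀ ht <| by linear_combination hline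
  linear_combination q x * this - q' x * htx

variable [CharZero K] {u w : V} (hu : q u = 0) (hw : q w = 0) (huw : polar q u w ≠ 0)
include hu hw huw

theorem polar_mul_polar_eq_of_isotropic_pair (v : V) :
    polar q' u w * polar q v w = polar q u w * polar q' v w := by
  have key : ∀ s ≠ -polar q u v / polar q u w,
      (polar q' u v + s * polar q' u w) * (q v + s * polar q v w) =
        (polar q u v + s * polar q u w) * (q' v + s * polar q' v w) := by
    intro s hs
    have hx : polar q u (v + s • w) ≠ 0 := by
      rw [polar_add_right, polar_smul_right, smul_eq_mul]
      contrapose! hs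
      rw [eq_div_iff huw]
      linear_combination hs
    simpa [polar_add_right, polar_smul_right, map_add_smul, hw, hq' w hw] using
      polar_mul_eq_polar_mul_of_isotropic hq' hu hx
  exact mul_eq_mul_of_forall_ne_linear_mul_linear key

theorem eq_mul_of_isotropic_pair (v : V) : q' v = polar q' u w / polar q u w * q v := by
  set c := polar q' u w / polar q u w
  have hcw : polar q' v w = c * polar q v w := by
    rw [div_mul_eq_mul_div, eq_div_iff huw]
    linear_combination (polar_mul_polar_eq_of_isotropic_pair hq' hu hw huw v).symm
  have hcu : ∀ y, polar q' u y = c * polar q u y := fun y => by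
    have := polar_mul_polar_eq_of_isotropic_pair hq' hw hu (by rwa [polar_comm]) y
    rw [polar_comm q' w, polar_comm q w, polar_comm q' y, polar_comm q y] at this
    rw [div_mul_eq_mul_div, eq_div_iff huw]
    linear_combination this.symm
  set s := (1 - polar q u v) / polar q u w
  have hx : polar q u (v + s • w) = 1 := by
    rw [polar_add_right, polar_smul_right, smul_eq_mul, div_mul_cancel₀ _ huw]
    ring
  have := polar_mul_eq_polar_mul_of_isotropic hq' hu (x := v + s • w) (by simp [hx])
  rw [hcu, hx, map_add_smul, map_add_smul, hw, hq' w hw, hcw] at this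
  linear_combination -this

end Cone

end QuadraticForm

theorem quadric_cone_automorphism_conformal_general (V : Type*) [AddCommGroup V] [Module ℂ V]
    (h3 : 3 ≤ Module.finrank ℂ V)
    (q : QuadraticForm ℂ V)
    (hnd : ∀ v : V, (∀ w : V, QuadraticMap.polar (⇑q) v w = 0) → v = 0)
    (g : V ≃ₗ[ℂ] V)
    (hg : (⇑g) '' {v : V | q v = 0} = {v : V | q v = 0}) :
    ∃ c : ℂ, c ≠ 0 ∧ ∀ v : V, q (g v) = c * q v := by
  have hcone : ∀ x, q x = 0 → q.comp (g : V →ₗ[ℂ] V) x = 0 := fun x hx =>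
    hg.subset (Set.mem_image_of_mem g hx)
  obtain ⟨u, w, hu, hw, huw⟩ := QuadraticForm.exists_isotropic_pair (by omega) hnd
  have hconf := QuadraticForm.eq_mul_of_isotropic_pair hcone hu hw huw
  refine ⟨_, fun hc => huw ?_, hconf⟩
  have := hconf (g.symm (u + w))
  rw [hc, zero_mul, QuadraticMap.comp_apply, LinearEquiv.coe_coe, LinearEquiv.apply_symm_apply,
    QuadraticMap.map_add q, hu, hw, zero_add, zero_add] at this
  exact this

/-- Let `V` be a complex vector space with `dim V ≥ 3` and `q` a
nondegenerate quadratic form on `V` (nondegeneracy: the polar bilinear form has trivial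
kernel). If `g ∈ GL(V)` maps the zero cone `{v | q(v) = 0}` onto itself, then there is a
nonzero constant `c ∈ ℂ` with `q(g(v)) = c·q(v)` for all `v`. Thus the linear automorphism
group of the affine cone over a smooth quadric is the conformal orthogonal group. -/
theorem quadric_cone_automorphism_conformal (V : Type*) [AddCommGroup V] [Module ℂ V]
    [FiniteDimensional ℂ V] (h3 : 3 ≤ Module.finrank ℂ V)
    (q : QuadraticForm ℂ V)
    (hnd : ∀ v : V, (∀ w : V, QuadraticMap.polar (⇑q) v w = 0) → v = 0)
    (g : V ≃ₗ[ℂ] V)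
    (hg : (⇑g) '' {v : V | q v = 0} = {v : V | q v = 0}) :
    ∃ c : ℂ, c ≠ 0 ∧ ∀ v : V, q (g v) = c * q v :=
  quadric_cone_automorphism_conformal_general V h3 q hnd g hg
end
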